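/- Let a, d, u, w be integers with d ≥ 1 and w ≥ 0. Then ∑_{k+m+r=d, k,m,r≥0, r even} (-1)^r v^{binom(r+1,2) − 2(k-1)m}/([r]_v![2k]_v!![2m]_v!!) + ∑_{k+m+r=d, k,m,r≥0, r odd} (-1)^r v^{binom(r+1,2) − 2k(m-1)}/([r]_v![2k]_v!![2m]_v!!) = 0 in ℚ(v). -/

import Mathlib

open scoped BigOperators
open Finset

noncomputable section

abbrev K : Type := RatFunc ℚ

def v : K := RatFunc.X

/-- Balanced quantum integer `[n]_v = (v^n - v^{-n})/(v - v⁻¹)`. -/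
def qint (n : ℤ) : K := (v ^ n - v ^ (-n)) / (v - v⁻¹)

/-- Balanced quantum factorial `[n]_v!`. -/
def qfact : ℕ → K
  | 0 => 1
  | n + 1 => qfact n * qint ((n : ℤ) + 1)

/-- Balanced Gaussian binomial coefficient `[p choose t]_v`. -/
def qbinom (p t : ℕ) : K := qfact p / (qfact t * qfact (p - t))

/-- Quantum double factorial `[2k]_v!! = [2k]_v [2k-2]_v ⋯ [2]_v`. -/
def ddfact : ℕ → K
  | 0 => 1
  | k + 1 => ddfact k * qint (2 * ((k : ℤ) + 1))


def c2 (x : ℤ) : ℤ := x * (x - 1) / 2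

/-! Swapping `k` and `m` in the odd part turns the two sums into one sum of `tripleTerm k m r` over
`k + m + r = d`. Grouped by `n = k + m`, the inner sum `∑_{k+m=n} v^{-2(k-1)m}/([2k]!![2m]!!)` equals
`v^{n - binom(n,2)}/[n]!`: multiplied by `[2n+2] = v^{-2m}[2k] + v^{2k}[2m]` both sides obey the
same recursion. What remains is `v^d` times the alternating sum
`∑_{n+r=d} (-1)^r v^{binom(r,2) - binom(n,2)}/([n]![r]!)`, which vanishes for `d ≥ 1`: multiplying it
by `[d] = v^r[n] + v^{-n}[r]` and shifting `n` resp. `r` down by one makes the terms cancel in pairs. -/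

lemma sum_triangle_eq_sum_range_sum_antidiagonal {M : Type*} [AddCommMonoid M] (d : ℕ)
    (f : ℕ → ℕ → M) (g : ℕ → ℕ → ℕ → M) (hfg : ∀ k m, k + m ≤ d → f k m = g k m (d - k - m)) :
    ∑ k ∈ range (d + 1), ∑ m ∈ range (d + 1 - k), f k m
      = ∑ n ∈ range (d + 1), ∑ p ∈ antidiagonal n, g p.1 p.2 (d - n) := by
  rw [sum_sigma', sum_sigma']
  refine sum_bij' (fun x _ => ⟨x.1 + x.2, (x.1, x.2)⟩) (fun y _ => ⟨y.2.1, y.2.2⟩) ?_ ?_ ?_ ?_ ?_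
  · intro x hx
    simp only [mem_sigma, mem_range, HasAntidiagonal.mem_antidiagonal, and_true] at hx ⊢
    omega
  · intro y hy
    simp only [mem_sigma, mem_range, HasAntidiagonal.mem_antidiagonal] at hy ⊢
    omega
  · intro x _
    rfl
  · intro y hy
    simp only [mem_sigma, HasAntidiagonal.mem_antidiagonal] at hy
    ext <;> simp [hy.2]
  · intro x hx
    simp only [mem_sigma, mem_range] at hx
    rw [hfg _ _ (by omega), Nat.sub_sub]

lemma v_ne_zero : v ≠ 0 := RatFunc.X_ne_zero

lemma v_zpow_injective : Function.Injective fun j : ℤ => v ^ j := by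
  classical
  intro a b (h : v ^ a = v ^ b)
  simpa [v] using congrArg (RatFunc.inftyValuation ℚ) h

lemma qint_ne_zero {n : ℤ} (hn : n ≠ 0) : qint n ≠ 0 := by
  have key : ∀ {j : ℤ}, j ≠ 0 → v ^ j - v ^ (-j) ≠ 0 := fun hj h =>
    hj (by have := v_zpow_injective (sub_eq_zero.1 h); omega)
  exact div_ne_zero (key hn) (by simpa using key one_ne_zero)

lemma qint_zero : qint 0 = 0 := by simp [qint]

lemma qint_add (a b : ℤ) : qint (a + b) = v ^ b * qint a + v ^ (-a) * qint b := by
  simp only [qint, neg_add, zpow_add₀ v_ne_zero]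
  ring

lemma qint_two_mul (a : ℤ) : qint (2 * a) = qint a * (v ^ a + v ^ (-a)) := by
  simp only [qint, two_mul, neg_add, zpow_add₀ v_ne_zero]
  ring

lemma qfact_ne_zero : ∀ n, qfact n ≠ 0
  | 0 => one_ne_zero
  | n + 1 => mul_ne_zero (qfact_ne_zero n) (qint_ne_zero (by omega))

lemma ddfact_ne_zero : ∀ n, ddfact n ≠ 0
  | 0 => one_ne_zero
  | n + 1 => mul_ne_zero (ddfact_ne_zero n) (qint_ne_zero (by omega))

lemma c2_add_one (x : ℤ) : c2 (x + 1) = c2 x + x := by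
  unfold c2
  rw [show (x + 1) * (x + 1 - 1) = x * (x - 1) + x * 2 by ring, Int.add_mul_ediv_right _ _ two_ne_zero]

def ddfactConv (n : ℕ) : K :=
  ∑ p ∈ antidiagonal n, v ^ (-(2 * ((p.1 : ℤ) - 1) * p.2)) / (ddfact p.1 * ddfact p.2)

lemma qint_mul_ddfactConv_succ (n : ℕ) :
    qint (2 * ((n : ℤ) + 1)) * ddfactConv (n + 1)
      = (v ^ (2 : ℤ) + v ^ (-2 * (n : ℤ))) * ddfactConv n := by
  set t : ℕ × ℕ → K := fun p => v ^ (-(2 * ((p.1 : ℤ) - 1) * p.2)) / (ddfact p.1 * ddfact p.2)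
  have qint_split : ∀ p ∈ antidiagonal (n + 1), qint (2 * ((n : ℤ) + 1)) * t p
      = v ^ (-(2 * (p.2 : ℤ))) * qint (2 * p.1) * t p + v ^ (2 * (p.1 : ℤ)) * qint (2 * p.2) * t p := by
    intro p hp
    have hp : 2 * ((n : ℤ) + 1) = 2 * p.2 + 2 * p.1 := by have := mem_antidiagonal.1 hp; omega
    rw [hp, qint_add]
    ring
  have hq : ∀ j : ℕ, qint (2 * ((j : ℤ) + 1)) ≠ 0 := fun j => qint_ne_zero (by omega)
  have shift_fst : ∑ p ∈ antidiagonal (n + 1), v ^ (-(2 * (p.2 : ℤ))) * qint (2 * p.1) * t p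
      = v ^ (-2 * (n : ℤ)) * ddfactConv n := by
    rw [Nat.sum_antidiagonal_succ, ddfactConv, mul_sum, ← Nat.sum_antidiagonal_swap]
    simp only [Nat.cast_zero, mul_zero, qint_zero, zero_mul, zero_add]
    refine sum_congr rfl fun p hp => ?_
    have hp : (n : ℤ) = p.1 + p.2 := by have := mem_antidiagonal.1 hp; omega
    have := hq p.2
    simp only [t, ddfact, Prod.fst_swap, Prod.snd_swap, hp]
    push_cast
    field_simp
    -- `ring_nf` normalises the exponents; splitting them into monomials lets `field_simp`
    -- compare the resulting powers of `v`.
    ring_nf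
    simp only [zpow_add₀ v_ne_zero, zpow_sub₀ v_ne_zero, zpow_neg, zpow_mul, zpow_ofNat]
    field_simp [v_ne_zero]
  have shift_snd : ∑ p ∈ antidiagonal (n + 1), v ^ (2 * (p.1 : ℤ)) * qint (2 * p.2) * t p
      = v ^ (2 : ℤ) * ddfactConv n := by
    rw [Nat.sum_antidiagonal_succ', ddfactConv, mul_sum]
    simp only [Nat.cast_zero, mul_zero, qint_zero, zero_mul, zero_add]
    refine sum_congr rfl fun p _ => ?_
    have := hq p.2
    simp only [t, ddfact]
    push_cast
    field_simp
    ring_nf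
    simp only [zpow_add₀ v_ne_zero, zpow_sub₀ v_ne_zero, zpow_neg, zpow_mul, zpow_ofNat]
    field_simp [v_ne_zero]
  rw [ddfactConv, mul_sum, sum_congr rfl qint_split, sum_add_distrib, shift_fst, shift_snd]
  ring

lemma ddfactConv_eq (n : ℕ) : ddfactConv n = v ^ ((n : ℤ) - c2 n) / qfact n := by
  induction n with
  | zero => simp [ddfactConv, c2, ddfact, qfact]
  | succ n ih =>
    have hq := qint_ne_zero (n := (n : ℤ) + 1) (by omega)
    apply mul_left_cancel₀ (qint_ne_zero (n := 2 * ((n : ℤ) + 1)) (by omega))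
    rw [qint_mul_ddfactConv_succ, ih, qint_two_mul, qfact]
    push_cast
    rw [c2_add_one]
    field_simp
    ring_nf
    simp only [zpow_add₀ v_ne_zero, zpow_sub₀ v_ne_zero, zpow_neg, zpow_mul, zpow_ofNat]
    field_simp [v_ne_zero]

lemma alternating_sum_antidiagonal_div_qfact_eq_zero {d : ℕ} (hd : d ≠ 0) :
    ∑ p ∈ antidiagonal d, (-1 : K) ^ p.2 * v ^ (c2 p.2 - c2 p.1) / (qfact p.1 * qfact p.2) = 0 := by
  obtain ⟨e, rfl⟩ := Nat.exists_eq_succ_of_ne_zero hd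
  set t : ℕ × ℕ → K := fun p => (-1 : K) ^ p.2 * v ^ (c2 p.2 - c2 p.1) / (qfact p.1 * qfact p.2)
  have qint_split : ∀ p ∈ antidiagonal (e + 1), qint ((e : ℤ) + 1) * t p
      = v ^ (p.2 : ℤ) * qint p.1 * t p + v ^ (-(p.1 : ℤ)) * qint p.2 * t p := by
    intro p hp
    have hp : (e : ℤ) + 1 = p.1 + p.2 := by have := mem_antidiagonal.1 hp; omega
    rw [hp, qint_add]
    ring
  apply mul_left_cancel₀ (qint_ne_zero (n := (e : ℤ) + 1) (by omega))
  rw [mul_zero, mul_sum, sum_congr rfl qint_split, sum_add_distrib, Nat.sum_antidiagonal_succ,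
    Nat.sum_antidiagonal_succ']
  simp only [Nat.cast_zero, qint_zero, mul_zero, zero_mul, zero_add, ← sum_add_distrib]
  refine sum_eq_zero fun p _ => ?_
  have := qint_ne_zero (n := (p.1 : ℤ) + 1) (by omega)
  have := qint_ne_zero (n := (p.2 : ℤ) + 1) (by omega)
  simp only [t, qfact, pow_succ]
  push_cast
  rw [c2_add_one, c2_add_one]
  field_simp
  ring_nf
  simp only [zpow_add₀ v_ne_zero, zpow_sub₀ v_ne_zero, zpow_neg]
  field_simp [v_ne_zero]
  ring

def tripleTerm (k m r : ℕ) : K :=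
  (-1 : K) ^ r * v ^ (c2 ((r : ℤ) + 1) - 2 * ((k : ℤ) - 1) * m) / (qfact r * ddfact k * ddfact m)

lemma sum_antidiagonal_tripleTerm (n r : ℕ) :
    ∑ p ∈ antidiagonal n, tripleTerm p.1 p.2 r
      = (-1 : K) ^ r * v ^ c2 ((r : ℤ) + 1) / qfact r * ddfactConv n := by
  rw [ddfactConv, mul_sum]
  refine sum_congr rfl fun p _ => ?_
  rw [tripleTerm, sub_eq_add_neg, zpow_add₀ v_ne_zero]
  ring

lemma sum_range_sum_antidiagonal_tripleTerm_eq_zero {d : ℕ} (hd : d ≠ 0) :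
    ∑ n ∈ range (d + 1), ∑ p ∈ antidiagonal n, tripleTerm p.1 p.2 (d - n) = 0 := by
  simp only [sum_antidiagonal_tripleTerm, ddfactConv_eq]
  calc _ = ∑ p ∈ antidiagonal d, (-1 : K) ^ p.2 * v ^ c2 ((p.2 : ℤ) + 1) / qfact p.2 *
          (v ^ ((p.1 : ℤ) - c2 p.1) / qfact p.1) :=
        (Nat.sum_antidiagonal_eq_sum_range_succ (fun n r => (-1 : K) ^ r * v ^ c2 ((r : ℤ) + 1) /
          qfact r * (v ^ ((n : ℤ) - c2 n) / qfact n)) d).symm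
    _ = ∑ p ∈ antidiagonal d, v ^ (d : ℤ) *
          ((-1 : K) ^ p.2 * v ^ (c2 p.2 - c2 p.1) / (qfact p.1 * qfact p.2)) := by
        refine sum_congr rfl fun p hp => ?_
        have hp : (d : ℤ) = p.1 + p.2 := by have := mem_antidiagonal.1 hp; omega
        simp only [hp, c2_add_one, zpow_add₀ v_ne_zero, zpow_sub₀ v_ne_zero]
        ring
    _ = 0 := by rw [← mul_sum, alternating_sum_antidiagonal_div_qfact_eq_zero hd, mul_zero]

theorem symmetrized_triple_sum_vanishes_general (d : ℕ) (hd : 1 ≤ d) :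
    (∑ k ∈ range (d + 1), ∑ m ∈ range (d + 1 - k),
      if (d - k - m) % 2 = 0 then
        (-1 : K) ^ (d - k - m) *
          v ^ (c2 ((d : ℤ) - k - m + 1) - 2 * ((k : ℤ) - 1) * (m : ℤ))
          / (qfact (d - k - m) * ddfact k * ddfact m)
      else 0)
    + (∑ k ∈ range (d + 1), ∑ m ∈ range (d + 1 - k),
      if (d - k - m) % 2 = 1 then
        (-1 : K) ^ (d - k - m) *
          v ^ (c2 ((d : ℤ) - k - m + 1) - 2 * (k : ℤ) * ((m : ℤ) - 1))
          / (qfact (d - k - m) * ddfact k * ddfact m)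
      else 0) = 0 := by
  rw [sum_triangle_eq_sum_range_sum_antidiagonal d _
      (fun k m r => if r % 2 = 0 then tripleTerm k m r else 0) ?even,
    sum_triangle_eq_sum_range_sum_antidiagonal d _
      (fun k m r => if r % 2 = 1 then tripleTerm m k r else 0) ?odd,
    ← sum_add_distrib]
  case even =>
    intro k m hkm
    rw [tripleTerm, show (d : ℤ) - k - m = ((d - k - m : ℕ) : ℤ) by omega]
  case odd =>
    intro k m hkm
    rw [tripleTerm, show (d : ℤ) - k - m = ((d - k - m : ℕ) : ℤ) by omega]
    ring_nf
  refine (sum_congr rfl fun n _ => ?_).trans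
    (sum_range_sum_antidiagonal_tripleTerm_eq_zero (by omega))
  rw [← Nat.sum_antidiagonal_swap
      (f := fun p => if (d - n) % 2 = 1 then tripleTerm p.2 p.1 (d - n) else 0),
    ← sum_add_distrib]
  refine sum_congr rfl fun p _ => ?_
  rcases Nat.mod_two_eq_zero_or_one (d - n) with h | h <;> simp [h]

theorem symmetrized_triple_sum_vanishes (a u w : ℤ) (d : ℕ) (hd : 1 ≤ d) (hw : 0 ≤ w) :
    (∑ k ∈ range (d + 1), ∑ m ∈ range (d + 1 - k),
      if (d - k - m) % 2 = 0 then
        (-1 : K) ^ (d - k - m) *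
          v ^ (c2 ((d : ℤ) - k - m + 1) - 2 * ((k : ℤ) - 1) * (m : ℤ))
          / (qfact (d - k - m) * ddfact k * ddfact m)
      else 0)
    + (∑ k ∈ range (d + 1), ∑ m ∈ range (d + 1 - k),
      if (d - k - m) % 2 = 1 then
        (-1 : K) ^ (d - k - m) *
          v ^ (c2 ((d : ℤ) - k - m + 1) - 2 * (k : ℤ) * ((m : ℤ) - 1))
          / (qfact (d - k - m) * ddfact k * ddfact m)
      else 0) = 0 :=
  symmetrized_triple_sum_vanishes_general d hd
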